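/- arXiv:2507.00250 — 2 statements merged into one kernel-verified Lean document; each statement's English description precedes it below -/
import Mathlib

section
/- Let Ω ⊆ ℝ² satisfy property (i). Then: (1) Ω has property (*) if and only if its antipolar Ω^◇ has property (**); (2) Ω^◇ has property (*) if and only if Ω has property (**). -/
open scoped Pointwise

/-- The antipolar of a set `Ω ⊆ ℝ²`:
`Ω^◇ = {(p,q) : p·x − q·y ≥ 1 for all (x,y) ∈ Ω}`. -/
def antipolar (Ω : Set (ℝ × ℝ)) : Set (ℝ × ℝ) :=
  {pq | ∀ xy ∈ Ω, 1 ≤ pq.1 * xy.1 - pq.2 * xy.2}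

/-- Property (i): `Ω` is nonempty, convex, closed, does not contain the origin,
and has the ray property `λΩ ⊆ Ω` for every `λ > 1`. -/
def PropI (Ω : Set (ℝ × ℝ)) : Prop :=
  Ω.Nonempty ∧ Convex ℝ Ω ∧ IsClosed Ω ∧ (0 : ℝ × ℝ) ∉ Ω ∧
    ∀ c : ℝ, 1 < c → c • Ω ⊆ Ω

/-- Property (*): no ray from the origin lies on the boundary of `Ω`,
i.e. `λΩ ∩ ∂Ω = ∅` for all `λ > 1`. -/
def PropStar (Ω : Set (ℝ × ℝ)) : Prop :=
  ∀ c : ℝ, 1 < c → (c • Ω) ∩ frontier Ω = ∅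

/-- The closed cone generated by `Ω`: `C = closure(ℝ₊Ω)`. -/
def posCone (Ω : Set (ℝ × ℝ)) : Set (ℝ × ℝ) :=
  closure {x | ∃ t : ℝ, 0 ≤ t ∧ ∃ ω ∈ Ω, x = t • ω}

/-- `e` is a direction of a boundary ray of `C`: `e ≠ 0` and the whole ray
`ℝ₊ e` is contained in the frontier of `C`. -/
def IsBoundaryRayDir (C : Set (ℝ × ℝ)) (e : ℝ × ℝ) : Prop :=
  e ≠ 0 ∧ ∀ t : ℝ, 0 ≤ t → t • e ∈ frontier C

/-- Property (**): the boundary `∂Ω` comes arbitrarily close to each boundary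
ray of the cone `C = closure(ℝ₊Ω)`, i.e. `dist(l₀, Ω) = dist(l₁, Ω) = 0`. -/
def PropSS (Ω : Set (ℝ × ℝ)) : Prop :=
  ∀ e : ℝ × ℝ, IsBoundaryRayDir (posCone Ω) e →
    ∀ ε : ℝ, 0 < ε → ∃ t : ℝ, 0 ≤ t ∧ ∃ b ∈ Ω, dist (t • e) b < ε

/-! Write `pair p x = p₁x₁ − p₂x₂`, so that `Ω^◇ = {p | pair p ≥ 1 on Ω}`. Because of the ray
property, a supporting line of `Ω` at a point `cω` (`c > 1`, `ω ∈ Ω`) passes through the origin,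
so (*) fails exactly when some `pair e` with `e ≠ 0` is `≥ 0` on `Ω` and vanishes at a point of `Ω`.
Such an `e` spans a boundary ray of the cone of `Ω^◇`, and since `pair · ω ≥ 1` on `Ω^◇` while
`pair (t • e) ω = 0`, that ray stays at positive distance from `Ω^◇`.

Conversely, a boundary ray `ℝ₊e` of the cone of `Ω^◇` gives `pair e ≥ 0` on `Ω`. Under (*) it is
positive on `Ω`; if its infimum is positive some `t • e` lies in `Ω^◇`, and otherwise it tends to
`0` along an asymptotic direction `u` of `Ω` with `pair e u = 0`. Separating the far points `A • u`
from `Ω` yields points of `Ω^◇` whose `pair · u` tends to `0`, and in the plane this forces them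
to approach the ray. Part (2) is part (1) for `Ω^◇`, by the bipolar theorem `Ω^◇◇ = Ω`. -/

open Filter Topology

section General

variable {E : Type*}

theorem nonneg_of_forall_le_of_smul_subset [AddCommGroup E] [Module ℝ E]
    {F : Type*} [FunLike F E ℝ] [LinearMapClass F ℝ E ℝ] {S : Set E}
    (hS : ∀ c : ℝ, 1 < c → c • S ⊆ S) {f : F} {a : ℝ} (hf : ∀ x ∈ S, a ≤ f x) :
    ∀ x ∈ S, 0 ≤ f x := by
  intro x hx
  by_contra! hneg
  obtain ⟨c, hc⟩ := exists_gt (max 1 (a / f x))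
  have hcx : a ≤ c * f x := by
    simpa [map_smul] using hf _ (hS c (le_max_left _ _ |>.trans_lt hc) (Set.smul_mem_smul_set hx))
  have : c * f x < a := (div_lt_iff_of_neg hneg).1 ((le_max_right _ _).trans_lt hc)
  linarith

variable [NormedAddCommGroup E] [NormedSpace ℝ E]

theorem notMem_interior_of_apply_eq_zero {S : Set E} {f : StrongDual ℝ E} (hf : f ≠ 0)
    (hS : ∀ x ∈ S, 0 ≤ f x) {x : E} (hx : f x = 0) : x ∉ interior S := by
  intro hxS
  obtain ⟨v, hv⟩ : ∃ v, f v ≠ 0 := by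
    by_contra! h
    exact hf (ContinuousLinearMap.ext h)
  have hlim : Tendsto (fun τ : ℝ => x - τ • f v • v) (𝓝[>] 0) (𝓝 x) := by
    have : Continuous fun τ : ℝ => x - τ • f v • v := by fun_prop
    simpa using (this.tendsto 0).mono_left nhdsWithin_le_nhds
  obtain ⟨τ, hτS, hτ⟩ :=
    ((hlim.eventually (mem_interior_iff_mem_nhds.1 hxS)).and self_mem_nhdsWithin).exists
  have := hS _ hτS
  simp only [map_sub, map_smul, hx, smul_eq_mul] at this
  nlinarith [mul_pos (Set.mem_Ioi.1 hτ) (mul_self_pos.2 hv)]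

theorem exists_ne_zero_isMinOn_of_mem_frontier [FiniteDimensional ℝ E] {Ω : Set E}
    (hconv : Convex ℝ Ω) (hcl : IsClosed Ω) {x : E} (hx : x ∈ frontier Ω) :
    ∃ f : StrongDual ℝ E, f ≠ 0 ∧ IsMinOn f Ω x := by
  have hxΩ : x ∈ Ω := hcl.frontier_subset hx
  obtain ⟨z, hzΩ, hzx⟩ : ∃ z : ℕ → E, (∀ k, z k ∈ Ωᶜ) ∧ Tendsto z atTop (𝓝 x) := by
    rw [← mem_closure_iff_seq_limit, closure_compl]
    exact hx.2
  have hsep : ∀ k, ∃ f : StrongDual ℝ E, f ∈ Metric.sphere 0 1 ∧ ∀ w ∈ Ω, f (z k) ≤ f w := by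
    intro k
    obtain ⟨f, s, hfz, hfΩ⟩ := geometric_hahn_banach_point_closed hconv hcl (hzΩ k)
    have hf : f ≠ 0 := by
      rintro rfl
      have := hfΩ x hxΩ
      simp only [zero_apply] at hfz this
      linarith
    refine ⟨‖f‖⁻¹ • f, by simp [norm_smul, hf], fun w hw => ?_⟩
    simp only [FunLike.coe_smul, Pi.smul_apply, smul_eq_mul]
    gcongr
    exact (hfz.trans (hfΩ w hw)).le
  choose f hf1 hfΩ using hsep
  obtain ⟨g, hg1, φ, hφ, hfg⟩ := (isCompact_sphere (0 : StrongDual ℝ E) 1).tendsto_subseq hf1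
  refine ⟨g, by rintro rfl; simp at hg1, fun w hw => ?_⟩
  have hlim : Tendsto (fun k => f (φ k) (w - z (φ k))) atTop (𝓝 (g (w - x))) :=
    (isBoundedBilinearMap_apply.continuous.tendsto (g, w - x)).comp
      (hfg.prodMk_nhds (tendsto_const_nhds.sub (hzx.comp hφ.tendsto_atTop)))
  have : 0 ≤ g (w - x) := ge_of_tendsto' hlim fun k => by
    rw [map_sub, sub_nonneg]
    exact hfΩ (φ k) w hw
  rwa [map_sub, sub_nonneg] at this

end General

def pair (p : ℝ × ℝ) : StrongDual ℝ (ℝ × ℝ) :=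
  p.1 • ContinuousLinearMap.fst ℝ ℝ ℝ - p.2 • ContinuousLinearMap.snd ℝ ℝ ℝ

@[simp]
theorem pair_apply (p x : ℝ × ℝ) : pair p x = p.1 * x.1 - p.2 * x.2 := by
  simp [pair]

theorem pair_comm (p x : ℝ × ℝ) : pair p x = pair x p := by
  simp only [pair_apply]
  ring

@[simp]
theorem pair_add (p q : ℝ × ℝ) : pair (p + q) = pair p + pair q := by
  ext <;> simp; ring

@[simp]
theorem pair_smul (c : ℝ) (p : ℝ × ℝ) : pair (c • p) = c • pair p := by
  ext <;> simp

@[simp]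
theorem pair_sub (p q : ℝ × ℝ) : pair (p - q) = pair p - pair q := by
  ext <;> simp; ring

@[simp]
theorem pair_eq_zero {p : ℝ × ℝ} : pair p = 0 ↔ p = 0 := by
  refine ⟨fun h => ?_, fun h => by ext <;> simp [h]⟩
  have h₁ := DFunLike.congr_fun h (1, 0)
  have h₂ := DFunLike.congr_fun h (0, 1)
  simp only [pair_apply, zero_apply] at h₁ h₂
  exact Prod.ext (by simpa using h₁) (by simpa using h₂)

theorem exists_pair_eq (f : StrongDual ℝ (ℝ × ℝ)) : ∃ p, pair p = f := by
  refine ⟨(f (1, 0), -f (0, 1)), ContinuousLinearMap.ext fun x => ?_⟩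
  have hx : x = x.1 • ((1 : ℝ), (0 : ℝ)) + x.2 • ((0 : ℝ), (1 : ℝ)) := by simp
  conv_rhs => rw [hx, map_add, map_smul, map_smul]
  simp only [pair_apply, smul_eq_mul]
  ring

theorem exists_pair_separation {Ω : Set (ℝ × ℝ)} (hconv : Convex ℝ Ω) (hcl : IsClosed Ω)
    {x : ℝ × ℝ} (hx : x ∉ Ω) : ∃ p s, pair p x < s ∧ ∀ w ∈ Ω, s < pair p w := by
  obtain ⟨f, s, hfx, hfΩ⟩ := geometric_hahn_banach_point_closed hconv hcl hx
  obtain ⟨p, rfl⟩ := exists_pair_eq f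
  exact ⟨p, s, hfx, hfΩ⟩

theorem pair_nonneg_of_mem_posCone {S : Set (ℝ × ℝ)} {p : ℝ × ℝ} (hS : ∀ w ∈ S, 0 ≤ pair p w)
    {x : ℝ × ℝ} (hx : x ∈ posCone S) : 0 ≤ pair p x := by
  refine closure_minimal ?_ (isClosed_le continuous_const (pair p).continuous) hx
  rintro _ ⟨t, ht, w, hw, rfl⟩
  show 0 ≤ pair p (t • w)
  simpa only [map_smul, smul_eq_mul] using mul_nonneg ht (hS w hw)

theorem isClosed_posCone (S : Set (ℝ × ℝ)) : IsClosed (posCone S) :=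
  isClosed_closure

theorem smul_mem_posCone {S : Set (ℝ × ℝ)} {u e : ℝ × ℝ}
    (he : ∀ t : ℝ, 0 ≤ t → u + t • e ∈ S) {t : ℝ} (ht : 0 ≤ t) : t • e ∈ posCone S := by
  have hlim : Tendsto (fun s : ℝ => s • u + t • e) (𝓝[>] 0) (𝓝 (t • e)) := by
    have : Continuous fun s : ℝ => s • u + t • e := by fun_prop
    simpa using (this.tendsto 0).mono_left nhdsWithin_le_nhds
  refine mem_closure_of_tendsto hlim (eventually_mem_nhdsWithin.mono fun s hs => ?_)
  refine ⟨s, le_of_lt hs, u + (s⁻¹ * t) • e, he _ (by positivity [Set.mem_Ioi.1 hs]), ?_⟩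
  rw [smul_add, smul_smul, mul_inv_cancel_left₀ (ne_of_gt hs)]

section Antipolar

variable {Ω : Set (ℝ × ℝ)}

theorem mem_antipolar {p : ℝ × ℝ} : p ∈ antipolar Ω ↔ ∀ w ∈ Ω, 1 ≤ pair p w := by
  simp [antipolar]

theorem inv_smul_mem_antipolar {p : ℝ × ℝ} {s : ℝ} (hs : 0 < s) (hp : ∀ w ∈ Ω, s ≤ pair p w) :
    s⁻¹ • p ∈ antipolar Ω := by
  refine mem_antipolar.2 fun w hw => ?_
  simp only [pair_smul, smul_apply, smul_eq_mul]
  rw [inv_mul_eq_div, le_div_iff₀ hs, one_mul]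
  exact hp w hw

theorem add_smul_mem_antipolar {p e : ℝ × ℝ} (hp : p ∈ antipolar Ω)
    (he : ∀ w ∈ Ω, 0 ≤ pair e w) {t : ℝ} (ht : 0 ≤ t) : p + t • e ∈ antipolar Ω := by
  refine mem_antipolar.2 fun w hw => ?_
  simp only [pair_add, pair_smul, add_apply, smul_apply, smul_eq_mul]
  nlinarith [mem_antipolar.1 hp w hw, he w hw]

theorem antipolar_eq_biInter : antipolar Ω = ⋂ w ∈ Ω, pair w ⁻¹' Set.Ici 1 := by
  ext p
  simp [mem_antipolar, pair_comm p]

theorem propI_antipolar (hΩ : PropI Ω) : PropI (antipolar Ω) := by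
  obtain ⟨⟨w, hw⟩, hconv, hcl, h0, hray⟩ := hΩ
  refine ⟨?_, ?_, ?_, fun h => ?_, fun c hc => ?_⟩
  · obtain ⟨p, s, h0s, hs⟩ := exists_pair_separation hconv hcl h0
    rw [map_zero] at h0s
    exact ⟨s⁻¹ • p, inv_smul_mem_antipolar h0s fun w hw => (hs w hw).le⟩
  · rw [antipolar_eq_biInter]
    exact convex_iInter₂ fun w _ => (convex_Ici 1).linear_preimage (pair w).toLinearMap
  · rw [antipolar_eq_biInter]
    exact isClosed_biInter fun w _ => isClosed_Ici.preimage (pair w).continuous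
  · have := mem_antipolar.1 h w hw
    norm_num at this
  · rintro _ ⟨p, hp, rfl⟩
    refine mem_antipolar.2 fun w hw => ?_
    simp only [pair_smul, smul_apply, smul_eq_mul]
    nlinarith [mem_antipolar.1 hp w hw]

theorem antipolar_antipolar (hΩ : PropI Ω) : antipolar (antipolar Ω) = Ω := by
  refine Set.Subset.antisymm (fun v hv => ?_) fun w hw => mem_antipolar.2 fun p hp => ?_
  · have ⟨_, hconv, hcl, _, hray⟩ := hΩ
    by_contra hvΩ
    obtain ⟨p, s, hpv, hps⟩ := exists_pair_separation hconv hcl hvΩ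
    have hp : ∀ w ∈ Ω, 0 ≤ pair p w :=
      nonneg_of_forall_le_of_smul_subset hray fun w hw => (hps w hw).le
    obtain ⟨p₀, hp₀⟩ := (propI_antipolar hΩ).1
    -- `p` is a recession direction of `Ω^◇`, so `pair v` is nonnegative on it
    have hpv₀ : 0 ≤ pair p v := by
      rw [pair_comm]
      refine pair_nonneg_of_mem_posCone (fun q hq => zero_le_one.trans (mem_antipolar.1 hv q hq)) ?_
      simpa using smul_mem_posCone (fun t ht => add_smul_mem_antipolar hp₀ hp ht) zero_le_one
    have hs : 0 < s := hpv₀.trans_lt hpv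
    have := mem_antipolar.1 hv _ (inv_smul_mem_antipolar hs fun w hw => (hps w hw).le)
    rw [pair_comm, pair_smul, smul_apply, smul_eq_mul, inv_mul_eq_div, le_div_iff₀ hs] at this
    linarith
  · rw [pair_comm]
    exact mem_antipolar.1 hp w hw

theorem not_propStar_iff (hconv : Convex ℝ Ω) (hcl : IsClosed Ω)
    (hray : ∀ c : ℝ, 1 < c → c • Ω ⊆ Ω) :
    ¬ PropStar Ω ↔ ∃ e ≠ 0, (∀ w ∈ Ω, 0 ≤ pair e w) ∧ ∃ ω ∈ Ω, pair e ω = 0 := by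
  constructor
  · intro h
    simp only [PropStar, not_forall, Set.eq_empty_iff_forall_notMem, not_not] at h
    obtain ⟨c, hc, _, ⟨ω, hω, rfl⟩, hfr⟩ := h
    obtain ⟨f, hf, hmin⟩ := exists_ne_zero_isMinOn_of_mem_frontier hconv hcl hfr
    obtain ⟨e, rfl⟩ := exists_pair_eq f
    have he : ∀ w ∈ Ω, 0 ≤ pair e w := nonneg_of_forall_le_of_smul_subset hray hmin
    refine ⟨e, by simpa using hf, he, ω, hω, le_antisymm ?_ (he ω hω)⟩
    have := isMinOn_iff.1 hmin ω hω
    simp only [map_smul, smul_eq_mul] at this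
    nlinarith
  · rintro ⟨e, he0, he, ω, hω, heω⟩ hstar
    have h2ω : (2 : ℝ) • ω ∈ Ω := hray 2 one_lt_two (Set.smul_mem_smul_set hω)
    refine (Set.eq_empty_iff_forall_notMem.1 (hstar 2 one_lt_two)) _
      ⟨Set.smul_mem_smul_set hω, ?_⟩
    rw [hcl.frontier_eq]
    exact ⟨h2ω, notMem_interior_of_apply_eq_zero (pair_eq_zero.not.2 he0) he (by simp [heω])⟩

theorem not_propSS_antipolar (hΩ : PropI Ω) {e : ℝ × ℝ} (he0 : e ≠ 0)
    (he : ∀ w ∈ Ω, 0 ≤ pair e w) {ω : ℝ × ℝ} (hω : ω ∈ Ω) (heω : pair e ω = 0) :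
    ¬ PropSS (antipolar Ω) := by
  have ⟨_, _, _, h0, _⟩ := hΩ
  have hω0 : pair ω ≠ 0 := pair_eq_zero.not.2 fun h => h0 (h ▸ hω)
  obtain ⟨p₀, hp₀⟩ := (propI_antipolar hΩ).1
  have hcone : ∀ x ∈ posCone (antipolar Ω), 0 ≤ pair ω x := fun x =>
    pair_nonneg_of_mem_posCone fun p hp => by
      rw [pair_comm]
      exact zero_le_one.trans (mem_antipolar.1 hp ω hω)
  have hray : IsBoundaryRayDir (posCone (antipolar Ω)) e := by
    refine ⟨he0, fun t ht => ?_⟩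
    rw [(isClosed_posCone _).frontier_eq]
    refine ⟨smul_mem_posCone (fun t ht => add_smul_mem_antipolar hp₀ he ht) ht,
      notMem_interior_of_apply_eq_zero hω0 hcone ?_⟩
    rw [map_smul, pair_comm, heω, smul_zero]
  intro hSS
  obtain ⟨t, -, b, hb, hdist⟩ := hSS e hray (1 / ‖pair ω‖) (by positivity)
  have : 1 ≤ ‖pair ω‖ * dist (t • e) b := calc
    1 ≤ pair ω (b - t • e) := by
      rw [map_sub, map_smul, pair_comm ω e, heω, smul_zero, sub_zero, pair_comm]
      exact mem_antipolar.1 hb ω hω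
    _ ≤ ‖pair ω (b - t • e)‖ := Real.le_norm_self _
    _ ≤ ‖pair ω‖ * dist (t • e) b := by
      rw [dist_comm, dist_eq_norm]
      exact (pair ω).le_opNorm _
  rw [lt_div_iff₀ (norm_pos_iff.2 hω0), mul_comm] at hdist
  linarith

theorem smul_eq_pair_smul_of_pair_eq_zero {h w : ℝ × ℝ} (hw : pair h w = 0) (u : ℝ × ℝ) :
    (u.1 * w.2 - u.2 * w.1) • h = pair h u • (w.2, w.1) := by
  simp only [pair_apply] at hw
  ext <;> simp
  · linear_combination (-u.2) * hw
  · linear_combination (-u.1) * hw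

theorem det_ne_zero_of_pair_eq_zero {e u w : ℝ × ℝ} (hu : u ≠ 0) (heu : pair e u = 0)
    (hew : pair e w ≠ 0) : u.1 * w.2 - u.2 * w.1 ≠ 0 := by
  intro hd
  refine hu (Prod.ext ?_ ?_) <;> refine (mul_eq_zero.1 ?_).resolve_left hew <;>
    simp only [pair_apply] at heu hew ⊢
  · linear_combination w.1 * heu - e.2 * hd
  · linear_combination w.2 * heu - e.1 * hd

theorem exists_mem_posCone_pair_eq_zero (hcl : IsClosed Ω) (h0 : (0 : ℝ × ℝ) ∉ Ω)
    {e : ℝ × ℝ} (he : ∀ w ∈ Ω, 0 ≤ pair e w) (hinf : ∀ δ > 0, ∃ w ∈ Ω, pair e w < δ) :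
    ∃ u ∈ posCone Ω, u ≠ 0 ∧ pair e u = 0 := by
  obtain ⟨r, hr, hball⟩ := Metric.isOpen_iff.1 hcl.isOpen_compl 0 h0
  have hr' : ∀ w ∈ Ω, r ≤ ‖w‖ := fun w hw => by
    by_contra! h
    exact hball (by simpa using h) hw
  choose w hwΩ hw using fun k : ℕ => hinf ((k : ℝ) + 1)⁻¹ (by positivity)
  set v : ℕ → ℝ × ℝ := fun k => ‖w k‖⁻¹ • w k
  have hv : ∀ k, v k ∈ Metric.sphere 0 1 := fun k => by
    simp [v, norm_smul, (hr.trans_le (hr' _ (hwΩ k))).ne']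
  have hev : Tendsto (fun k => pair e (v k)) atTop (𝓝 0) := by
    refine squeeze_zero (fun k => ?_) (fun k => ?_)
      (by simpa using tendsto_one_div_add_atTop_nhds_zero_nat.const_mul r⁻¹) <;>
      simp only [v, map_smul, smul_eq_mul]
    · exact mul_nonneg (by positivity) (he _ (hwΩ k))
    · exact mul_le_mul (inv_anti₀ hr (hr' _ (hwΩ k))) (hw k).le (he _ (hwΩ k)) (by positivity)
  obtain ⟨u, hu, φ, hφ, hvu⟩ := (isCompact_sphere (0 : ℝ × ℝ) 1).tendsto_subseq hv
  refine ⟨u, mem_closure_of_tendsto hvu (Eventually.of_forall fun k =>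
      ⟨_, inv_nonneg.2 (norm_nonneg _), _, hwΩ (φ k), rfl⟩), ?_,
    tendsto_nhds_unique (((pair e).continuous.tendsto u).comp hvu) (hev.comp hφ.tendsto_atTop)⟩
  rintro rfl
  simp at hu

theorem exists_mem_antipolar_pair_lt (hconv : Convex ℝ Ω) (hcl : IsClosed Ω)
    (hray : ∀ c : ℝ, 1 < c → c • Ω ⊆ Ω) {e : ℝ × ℝ} (he : ∀ w ∈ Ω, 0 < pair e w)
    {u : ℝ × ℝ} (hu : u ∈ posCone Ω) (heu : pair e u = 0) {δ : ℝ} (hδ : 0 < δ) :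
    ∃ b ∈ antipolar Ω, 0 ≤ pair b u ∧ pair b u < δ := by
  have hδu : δ⁻¹ • u ∉ Ω := fun h => by simpa [heu] using he _ h
  obtain ⟨p, s, hpu, hps⟩ := exists_pair_separation hconv hcl hδu
  have hpu₀ : 0 ≤ pair p u := pair_nonneg_of_mem_posCone
    (nonneg_of_forall_le_of_smul_subset hray fun w hw => (hps w hw).le) hu
  rw [map_smul, smul_eq_mul, inv_mul_eq_div, div_lt_iff₀ hδ] at hpu
  have hs : 0 < s := by nlinarith
  refine ⟨s⁻¹ • p, inv_smul_mem_antipolar hs fun w hw => (hps w hw).le, ?_, ?_⟩ <;>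
    rw [pair_smul, smul_apply, smul_eq_mul, inv_mul_eq_div]
  · positivity
  · rwa [div_lt_iff₀ hs, mul_comm]

theorem exists_dist_smul_lt_of_mem_posCone (hconv : Convex ℝ Ω)
    (hcl : IsClosed Ω) (hray : ∀ c : ℝ, 1 < c → c • Ω ⊆ Ω) {e : ℝ × ℝ}
    (he : ∀ w ∈ Ω, 0 < pair e w) {w : ℝ × ℝ} (hw : w ∈ Ω) {u : ℝ × ℝ} (hu : u ∈ posCone Ω)
    (hu0 : u ≠ 0) (heu : pair e u = 0) {ε : ℝ} (hε : 0 < ε) :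
    ∃ t : ℝ, 0 ≤ t ∧ ∃ b ∈ antipolar Ω, dist (t • e) b < ε := by
  set d := u.1 * w.2 - u.2 * w.1
  have hd : 0 < |d| := abs_pos.2 (det_ne_zero_of_pair_eq_zero hu0 heu (he w hw).ne')
  set C := ‖((w.2, w.1) : ℝ × ℝ)‖
  obtain ⟨b, hb, hbu₀, hbu⟩ :=
    exists_mem_antipolar_pair_lt hconv hcl hray he hu heu (δ := ε * |d| / (C + 1)) (by positivity)
  set t := pair b w / pair e w
  refine ⟨t, div_nonneg (zero_le_one.trans (mem_antipolar.1 hb w hw)) (he w hw).le, b, hb, ?_⟩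
  -- `b - t • e` vanishes against `w` and agrees with `b` against `u`; in the plane
  -- such a vector is a multiple of the fixed vector `(w₂, w₁)`
  have hker : pair (b - t • e) w = 0 := by
    simp only [t, pair_sub, pair_smul, sub_apply, smul_apply, smul_eq_mul]
    rw [div_mul_cancel₀ _ (he w hw).ne', sub_self]
  have key := congrArg norm (smul_eq_pair_smul_of_pair_eq_zero hker u)
  simp only [pair_sub, pair_smul, sub_apply, smul_apply, heu, smul_zero, sub_zero, norm_smul,
    Real.norm_eq_abs, abs_of_nonneg hbu₀] at key
  rw [dist_comm, dist_eq_norm, ← mul_lt_mul_iff_right₀ hd, key]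
  calc pair b u * C ≤ ε * |d| / (C + 1) * C := by gcongr
    _ < ε * |d| := by
      rw [div_mul_eq_mul_div, div_lt_iff₀ (by positivity)]
      nlinarith [mul_pos hε hd]
    _ = |d| * ε := mul_comm _ _

theorem propSS_antipolar_of_propStar (hΩ : PropI Ω) (hstar : PropStar Ω) :
    PropSS (antipolar Ω) := by
  obtain ⟨⟨w₀, hw₀⟩, hconv, hcl, h0, hray⟩ := hΩ
  intro e ⟨he0, hfr⟩ ε hε
  have heC : e ∈ posCone (antipolar Ω) := by
    simpa using (isClosed_posCone _).frontier_subset (hfr 1 zero_le_one)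
  have he : ∀ w ∈ Ω, 0 ≤ pair e w := fun w hw => by
    rw [pair_comm]
    refine pair_nonneg_of_mem_posCone (fun p hp => ?_) heC
    rw [pair_comm]
    exact zero_le_one.trans (mem_antipolar.1 hp w hw)
  have hpos : ∀ w ∈ Ω, 0 < pair e w := fun w hw => (he w hw).lt_of_ne fun h =>
    (not_propStar_iff hconv hcl hray).2 ⟨e, he0, he, w, hw, h.symm⟩ hstar
  by_cases hinf : ∀ δ > 0, ∃ w ∈ Ω, pair e w < δ
  · obtain ⟨u, hu, hu0, heu⟩ := exists_mem_posCone_pair_eq_zero hcl h0 he hinf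
    exact exists_dist_smul_lt_of_mem_posCone hconv hcl hray hpos hw₀ hu hu0 heu hε
  · push Not at hinf
    obtain ⟨δ, hδ, hδe⟩ := hinf
    exact ⟨δ⁻¹, by positivity, δ⁻¹ • e, inv_smul_mem_antipolar hδ hδe, by simpa using hε⟩

theorem propStar_iff_propSS_antipolar (hΩ : PropI Ω) :
    PropStar Ω ↔ PropSS (antipolar Ω) := by
  have ⟨_, hconv, hcl, _, hray⟩ := hΩ
  refine ⟨propSS_antipolar_of_propStar hΩ, fun hSS => by_contra fun hstar => ?_⟩
  obtain ⟨e, he0, he, ω, hω, heω⟩ := (not_propStar_iff hconv hcl hray).1 hstar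
  exact not_propSS_antipolar hΩ he0 he hω heω hSS

end Antipolar

/-- Duality of the properties (*) and (**): for `Ω` satisfying property (i),
`Ω` has (*) iff `Ω^◇` has (**), and `Ω^◇` has (*) iff `Ω` has (**). -/
theorem dual_properties (Ω : Set (ℝ × ℝ)) (hΩ : PropI Ω) :
    (PropStar Ω ↔ PropSS (antipolar Ω)) ∧
      (PropStar (antipolar Ω) ↔ PropSS Ω) := by
  refine ⟨propStar_iff_propSS_antipolar hΩ, ?_⟩
  simpa only [antipolar_antipolar hΩ] using propStar_iff_propSS_antipolar (propI_antipolar hΩ)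
end

section
/- The maps ν ↦ U_ν and U ↦ ν_U are mutually inverse: (1) for every anti-norm ν on ℝⁿ, the anti-norm associated to its unit ball satisfies ν_{U_ν} = ν; (2) for every set U ⊆ ℝⁿ that is nonempty, closed, convex, does not contain the origin, and satisfies λU ⊆ U for all λ ≥ 1, the unit ball of the associated anti-norm satisfies U_{ν_U} = U. -/
open scoped Pointwise
open Filter Topology

/-- An anti-norm on a real normed space `E`: a function `ν : E → ℝ ∪ {−∞}`
(encoded as an `EReal`-valued function never equal to `+∞`) that is concave,
upper semicontinuous (closed hypograph), positively homogeneous, has nonempty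
effective domain, and is positive on the relative interior of its domain. -/
structure IsAntinorm {E : Type*} [NormedAddCommGroup E] [NormedSpace ℝ E]
    (ν : E → EReal) : Prop where
  ne_top : ∀ ξ, ν ξ ≠ ⊤
  concave : ∀ ξ η : E, ∀ a b : ℝ, 0 ≤ a → 0 ≤ b → a + b = 1 →
    (a : EReal) * ν ξ + (b : EReal) * ν η ≤ ν (a • ξ + b • η)
  closed_hypograph : IsClosed {p : E × ℝ | (p.2 : EReal) ≤ ν p.1}
  pos_homog : ∀ c : ℝ, 0 ≤ c → ∀ ξ : E, ν (c • ξ) = (c : EReal) * ν ξ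
  dom_nonempty : {ξ : E | ν ξ ≠ ⊥}.Nonempty
  pos_on_ri : ∀ ξ ∈ intrinsicInterior ℝ {ξ : E | ν ξ ≠ ⊥}, 0 < ν ξ

/-- `ν̊_U(ξ) = sup{λ > 0 : ξ ∈ λU}`, with `sup ∅ = −∞` (in `EReal`). -/
noncomputable def preAntinorm {E : Type*} [NormedAddCommGroup E]
    [NormedSpace ℝ E] (U : Set E) (ξ : E) : EReal :=
  sSup {l : EReal | ∃ r : ℝ, 0 < r ∧ ξ ∈ r • U ∧ l = (r : EReal)}

/-- `ν_U(ξ) = limsup_{η → ξ} ν̊_U(η)`, the upper semicontinuous hull. -/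
noncomputable def antinormOf {E : Type*} [NormedAddCommGroup E]
    [NormedSpace ℝ E] (U : Set E) (ξ : E) : EReal :=
  limsup (preAntinorm U) (𝓝 ξ)

/-!
The pre-anti-norm of `U_ν = {ν ≥ 1}` equals `ν` where `ν > 0` and lies below `ν` everywhere, so
its upper semicontinuous hull lies below the upper semicontinuous `ν` and agrees with it where
`ν > 0`. The relative interior of the convex domain of `ν` is dense in it and `ν > 0` there; hence
`ν ≥ 0` on its domain, and the points where `ν = 0` are limits of points where `ν > 0`.

Conversely, by the ray property `ν̊_U(η) > t > 0` forces `η ∈ t • U`, so `ν_U(ξ) ≥ 1` puts `ξ`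
in the closed sets `t • U` for all `t < 1`, hence in `U`.
-/

section IntrinsicInterior

variable {E : Type*} [NormedAddCommGroup E] [NormedSpace ℝ E] {s : Set E}

theorem Convex.combo_intrinsicInterior_self_mem_intrinsicInterior (hs : Convex ℝ s) {x y : E}
    (hx : x ∈ intrinsicInterior ℝ s) (hy : y ∈ s) {a b : ℝ} (ha : 0 < a) (hb : 0 ≤ b)
    (hab : a + b = 1) : a • x + b • y ∈ intrinsicInterior ℝ s := by
  obtain ⟨x, hx, rfl⟩ := hx
  obtain ⟨ε, hε, hball⟩ := Metric.mem_nhds_iff.1 (mem_interior_iff_mem_nhds.1 hx)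
  have hyA : y ∈ affineSpan ℝ s := subset_affineSpan ℝ s hy
  refine ⟨⟨a • x + b • y, (affineSpan ℝ s).convex x.2 hyA ha.le hb hab⟩, ?_, rfl⟩
  rw [mem_interior_iff_mem_nhds, Metric.mem_nhds_iff]
  refine ⟨a * ε, by positivity, fun v hv => ?_⟩
  -- `v = a • z + b • y`, where `z` lies within `ε` of `x` in the affine span
  let z : affineSpan ℝ s := ⟨AffineMap.lineMap y (v : E) a⁻¹, AffineMap.lineMap_mem _ hyA v.2⟩
  have hvz : (v : E) = a • (z : E) + b • y := by
    simp only [z, AffineMap.lineMap_apply_module, eq_sub_of_add_eq' hab, smul_add, smul_smul,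
      mul_sub, mul_inv_cancel₀ ha.ne', one_smul]
    module
  have hzx : dist (z : E) x = a⁻¹ * dist (v : E) (a • x + b • y) := by
    rw [dist_eq_norm, dist_eq_norm, hvz, ← abs_of_pos (inv_pos.2 ha), ← Real.norm_eq_abs,
      ← norm_smul]
    congr 1
    simp only [smul_sub, smul_add, smul_smul, inv_mul_cancel₀ ha.ne', one_smul]
    abel
  have hz : (z : E) ∈ s := hball <| by
    rw [Metric.mem_ball, Subtype.dist_eq, hzx, inv_mul_lt_iff₀ ha]
    exact hv
  show (v : E) ∈ s
  rw [hvz]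
  exact hs hz hy ha.le hb hab

theorem Convex.subset_closure_intrinsicInterior [FiniteDimensional ℝ E] (hs : Convex ℝ s) :
    s ⊆ closure (intrinsicInterior ℝ s) := by
  intro y hy
  obtain ⟨x, hx⟩ := Set.Nonempty.intrinsicInterior hs ⟨y, hy⟩
  refine closure_mono ?_ (segment_subset_closure_openSegment (right_mem_segment ℝ x y))
  rintro _ ⟨a, b, ha, hb, hab, rfl⟩
  exact hs.combo_intrinsicInterior_self_mem_intrinsicInterior hx hy ha hb.le hab

end IntrinsicInterior

section PreAntinorm

variable {E : Type*} [NormedAddCommGroup E] [NormedSpace ℝ E] {U : Set E} {ξ : E}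

theorem le_preAntinorm {r : ℝ} (hr : 0 < r) (hξ : ξ ∈ r • U) : (r : EReal) ≤ preAntinorm U ξ :=
  le_sSup ⟨r, hr, hξ, rfl⟩

theorem lt_preAntinorm_iff {a : EReal} :
    a < preAntinorm U ξ ↔ ∃ r : ℝ, 0 < r ∧ ξ ∈ r • U ∧ a < r := by
  simp only [preAntinorm, lt_sSup_iff]
  constructor
  · rintro ⟨_, ⟨r, hr, hξ, rfl⟩, har⟩
    exact ⟨r, hr, hξ, har⟩
  · rintro ⟨r, hr, hξ, har⟩
    exact ⟨r, ⟨r, hr, hξ, rfl⟩, har⟩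

theorem preAntinorm_le_antinormOf : preAntinorm U ξ ≤ antinormOf U ξ :=
  le_limsup_of_frequently_le <| Frequently.filter_mono (frequently_pure.2 le_rfl) (pure_le_nhds ξ)

theorem smul_subset_smul_of_le (hU : ∀ c : ℝ, 1 ≤ c → c • U ⊆ U) {s t : ℝ} (hs : 0 < s)
    (hst : s ≤ t) : t • U ⊆ s • U :=
  calc t • U = s • (s⁻¹ * t) • U := by rw [smul_smul, mul_inv_cancel_left₀ hs.ne']
    _ ⊆ s • U := Set.smul_set_mono (hU _ ((one_le_inv_mul₀ hs).2 hst))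

theorem mem_smul_of_lt_preAntinorm (hU : ∀ c : ℝ, 1 ≤ c → c • U ⊆ U) {t : ℝ} (ht : 0 < t)
    (h : (t : EReal) < preAntinorm U ξ) : ξ ∈ t • U := by
  obtain ⟨r, -, hξ, htr⟩ := lt_preAntinorm_iff.1 h
  exact smul_subset_smul_of_le hU ht (EReal.coe_lt_coe_iff.1 htr).le hξ

theorem mem_smul_of_lt_antinormOf (hcl : IsClosed U) (hU : ∀ c : ℝ, 1 ≤ c → c • U ⊆ U) {t : ℝ}
    (ht : 0 < t) (h : (t : EReal) < antinormOf U ξ) : ξ ∈ t • U := by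
  have hfreq : ∃ᶠ η in 𝓝 ξ, η ∈ t • U :=
    (frequently_lt_of_lt_limsup (by isBoundedDefault) h).mono
      fun η hη => mem_smul_of_lt_preAntinorm hU ht hη
  exact (hcl.smul_of_ne_zero ht.ne').closure_subset (mem_closure_iff_frequently.2 hfreq)

theorem IsClosed.mem_of_forall_mem_smul_of_lt_one (hcl : IsClosed U)
    (h : ∀ t ∈ Set.Ioo (0 : ℝ) 1, ξ ∈ t • U) : ξ ∈ U := by
  have hlim : Tendsto (fun t : ℝ => t⁻¹ • ξ) (𝓝[<] 1) (𝓝 ξ) := by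
    have hcont : ContinuousAt (fun t : ℝ => t⁻¹ • ξ) 1 :=
      (continuousAt_inv₀ one_ne_zero).smul continuousAt_const
    simpa using hcont.tendsto.mono_left nhdsWithin_le_nhds
  refine hcl.mem_of_tendsto hlim ?_
  filter_upwards [Ioo_mem_nhdsLT zero_lt_one] with t ht
  exact (Set.mem_smul_set_iff_inv_smul_mem₀ ht.1.ne' U ξ).1 (h t ht)

theorem setOf_one_le_antinormOf (hcl : IsClosed U) (hU : ∀ c : ℝ, 1 ≤ c → c • U ⊆ U) :
    {ξ | 1 ≤ antinormOf U ξ} = U := by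
  ext ξ
  refine ⟨fun h => hcl.mem_of_forall_mem_smul_of_lt_one fun t ht => ?_, fun h => ?_⟩
  · exact mem_smul_of_lt_antinormOf hcl hU ht.1 ((EReal.coe_lt_coe_iff.2 ht.2).trans_le h)
  · exact (le_preAntinorm one_pos (by rwa [one_smul])).trans preAntinorm_le_antinormOf

end PreAntinorm

namespace IsAntinorm

variable {E : Type*} [NormedAddCommGroup E] [NormedSpace ℝ E] {ν : E → EReal} {ξ : E}

theorem isClosed_superlevel (hν : IsAntinorm ν) (r : ℝ) : IsClosed {ξ | (r : EReal) ≤ ν ξ} :=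
  hν.closed_hypograph.preimage (continuous_id.prodMk continuous_const)

theorem upperSemicontinuous (hν : IsAntinorm ν) : UpperSemicontinuous ν := by
  intro ξ y hy
  obtain ⟨r, hξr, hry⟩ := EReal.exists_between_coe_real hy
  filter_upwards [(hν.isClosed_superlevel r).isOpen_compl.mem_nhds (not_le.2 hξr)] with η hη
  exact (not_le.1 (show ¬(r : EReal) ≤ ν η from hη)).trans hry

theorem convex_dom (hν : IsAntinorm ν) : Convex ℝ {ξ | ν ξ ≠ ⊥} := by
  intro ξ hξ η hη a b ha hb hab
  refine ne_bot_of_le_ne_bot ?_ (hν.concave ξ η a b ha hb hab)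
  rw [← EReal.coe_toReal (hν.ne_top ξ) hξ, ← EReal.coe_toReal (hν.ne_top η) hη]
  exact_mod_cast EReal.coe_ne_bot _

theorem dom_subset_closure_pos [FiniteDimensional ℝ E] (hν : IsAntinorm ν) :
    {ξ | ν ξ ≠ ⊥} ⊆ closure {ξ | 0 < ν ξ} :=
  hν.convex_dom.subset_closure_intrinsicInterior.trans (closure_mono hν.pos_on_ri)

theorem nonneg_of_ne_bot [FiniteDimensional ℝ E] (hν : IsAntinorm ν) (hξ : ν ξ ≠ ⊥) :
    0 ≤ ν ξ := by
  have hclosure : closure {ξ | 0 < ν ξ} ⊆ {ξ | 0 ≤ ν ξ} :=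
    closure_minimal (Set.ofPred_subset_ofPred.2 fun _ => le_of_lt)
      (by simpa using hν.isClosed_superlevel 0)
  exact hclosure (hν.dom_subset_closure_pos hξ)

theorem preAntinorm_ball_le (hν : IsAntinorm ν) (ξ : E) :
    preAntinorm {η | 1 ≤ ν η} ξ ≤ ν ξ := by
  refine sSup_le ?_
  rintro _ ⟨r, hr, ⟨u, hu, rfl⟩, rfl⟩
  rw [hν.pos_homog r hr.le u]
  calc (r : EReal) = r * 1 := (mul_one _).symm
    _ ≤ r * ν u := mul_le_mul_of_nonneg_left hu (EReal.coe_nonneg.2 hr.le)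

theorem preAntinorm_ball_of_pos (hν : IsAntinorm ν) (h : 0 < ν ξ) :
    preAntinorm {η | 1 ≤ ν η} ξ = ν ξ := by
  refine (hν.preAntinorm_ball_le ξ).antisymm ?_
  obtain ⟨x, hx⟩ : ∃ x : ℝ, ν ξ = x :=
    ⟨(ν ξ).toReal, (EReal.coe_toReal (hν.ne_top ξ) h.ne_bot).symm⟩
  have hx0 : 0 < x := by exact_mod_cast hx ▸ h
  refine hx ▸ le_preAntinorm hx0 ((Set.mem_smul_set_iff_inv_smul_mem₀ hx0.ne' _ _).2 ?_)
  show 1 ≤ ν (x⁻¹ • ξ)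
  rw [hν.pos_homog _ (inv_nonneg.2 hx0.le), hx, ← EReal.coe_mul, inv_mul_cancel₀ hx0.ne',
    EReal.coe_one]

theorem antinormOf_ball [FiniteDimensional ℝ E] (hν : IsAntinorm ν) :
    antinormOf {ξ | 1 ≤ ν ξ} = ν := by
  funext ξ
  refine le_antisymm ((limsup_le_limsup (.of_forall hν.preAntinorm_ball_le)).trans
    (hν.upperSemicontinuous.limsup_le ξ)) ?_
  rcases eq_or_ne (ν ξ) ⊥ with hbot | hdom
  · exact hbot ▸ bot_le
  rcases (hν.nonneg_of_ne_bot hdom).eq_or_lt with hzero | hpos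
  · rw [← hzero]
    refine le_limsup_of_frequently_le ?_
    refine (mem_closure_iff_frequently.1 (hν.dom_subset_closure_pos hdom)).mono fun η hη => ?_
    exact (hν.preAntinorm_ball_of_pos hη).symm ▸ hη.le
  · exact (hν.preAntinorm_ball_of_pos hpos).symm.le.trans preAntinorm_le_antinormOf

end IsAntinorm

/-- The maps `ν ↦ U_ν` and `U ↦ ν_U` are mutually inverse: for any anti-norm
`ν` on `ℝⁿ`, `ν_{U_ν} = ν`; and for any nonempty closed convex `U ⊆ ℝⁿ` not
containing the origin and with the ray property, `U_{ν_U} = U`. -/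
theorem antinorm_ball_mutually_inverse {n : ℕ} :
    (∀ ν : EuclideanSpace ℝ (Fin n) → EReal, IsAntinorm ν →
        antinormOf {ξ | 1 ≤ ν ξ} = ν) ∧
      (∀ U : Set (EuclideanSpace ℝ (Fin n)), U.Nonempty → IsClosed U →
        Convex ℝ U → (0 : EuclideanSpace ℝ (Fin n)) ∉ U →
        (∀ c : ℝ, 1 ≤ c → c • U ⊆ U) →
        {ξ | 1 ≤ antinormOf U ξ} = U) :=
  ⟨fun _ hν => hν.antinormOf_ball, fun _ _ hcl _ _ hU => setOf_one_le_antinormOf hcl hU⟩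
end
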